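/- arXiv:2101.01589 — 2 statements merged into one kernel-verified Lean document; each statement's English description precedes it below -/
import Mathlib

section
/- Let λ > 0 be real and let a be a nonzero complex number with |arg a| < π/4. Then ∑_{n=1}^∞ e^{−λn²/a²} = (a/2)·√(π/λ) − 1/2 + a·√(π/λ)·∑_{n=1}^∞ e^{−π²n²a²/λ} (the Poisson–Jacobi formula), where both series converge absolutely and √(π/λ) denotes the positive square root. -/
/-!
Put `t = (π/λ) a²`; the hypothesis on `arg a` makes `Re t > 0`, and both series are
tails of the theta series `θ(τ) = ∑_{n ∈ ℤ} exp(π i n² τ)`, at `τ = i t` and at `τ = i/t = -1/(i t)`.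
The modular transformation `θ(-1/τ) = (-iτ)^{1/2} θ(τ)` then reads
`1 + 2 ∑ e^{-λn²/a²} = t^{1/2} (1 + 2 ∑ e^{-π²n²a²/λ})`, and `t^{1/2} = a √(π/λ)` because `Re a > 0`.
-/

open Real Complex

lemma Complex.re_sq_pos_of_abs_arg_lt_pi_div_four {a : ℂ} (ha : a ≠ 0) (harg : |a.arg| < π / 4) :
    0 < (a ^ 2).re := by
  have hre : (a ^ 2).re = ‖a‖ ^ 2 * Real.cos (2 * a.arg) := by
    conv_lhs => rw [← norm_mul_exp_arg_mul_I a]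
    rw [mul_pow, ← Complex.exp_nat_mul, ← ofReal_pow,
      show ((2 : ℕ) : ℂ) * (a.arg * I) = ((2 * a.arg : ℝ) : ℂ) * I by push_cast; ring,
      re_ofReal_mul, exp_ofReal_mul_I_re]
  obtain ⟨hlo, hhi⟩ := abs_lt.mp harg
  rw [hre]
  exact mul_pos (pow_pos (norm_pos_iff.mpr ha) 2)
    (Real.cos_pos_of_mem_Ioo ⟨by linarith, by linarith⟩)

lemma Complex.inv_re_pos {t : ℂ} (ht : 0 < t.re) : 0 < t⁻¹.re := by
  rw [inv_re]
  exact div_pos ht (normSq_pos.mpr (ne_of_apply_ne re ht.ne'))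

lemma Complex.ofReal_mul_sq_cpow_one_half {c : ℝ} (hc : 0 < c) {a : ℂ} (ha : 0 < a.re) :
    ((c : ℂ) * a ^ 2) ^ (1 / 2 : ℂ) = a * (Real.sqrt c : ℂ) := by
  have hre : 0 < (a * (Real.sqrt c : ℂ)).re := by
    rw [re_mul_ofReal]
    exact mul_pos ha (Real.sqrt_pos.mpr hc)
  rw [← sq_cpow_two_inv hre, mul_pow, ← ofReal_pow, Real.sq_sqrt hc.le, mul_comm, one_div]

lemma pi_mul_I_mul_sq_mul_I_mul (x t : ℂ) : π * I * x ^ 2 * (I * t) = -π * x ^ 2 * t := by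
  linear_combination π * x ^ 2 * t * I_sq

section ThetaOnRightHalfPlane

variable {t : ℂ}

lemma summable_norm_cexp_neg_pi_mul_succ_sq (ht : 0 < t.re) :
    Summable fun n : ℕ => ‖cexp (-π * ((n : ℂ) + 1) ^ 2 * t)‖ := by
  have hτ : 0 < (I * t).im := by simpa using ht
  have hℤ := summable_norm_iff.mpr ((summable_jacobiTheta₂_term_iff 0 (I * t)).mpr hτ)
  have hℕ := hℤ.comp_injective (i := fun n : ℕ => (n : ℤ) + 1) fun m n h => by simpa using h
  simpa [Function.comp_def, jacobiTheta₂_term, pi_mul_I_mul_sq_mul_I_mul] using hℕ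

lemma jacobiTheta_I_mul (ht : 0 < t.re) :
    jacobiTheta (I * t) = 1 + 2 * ∑' n : ℕ, cexp (-π * ((n : ℂ) + 1) ^ 2 * t) := by
  have hτ : 0 < (I * t).im := by simpa using ht
  simp_rw [jacobiTheta_eq_tsum_nat hτ, pi_mul_I_mul_sq_mul_I_mul]

lemma jacobiTheta_I_mul_inv (ht : 0 < t.re) :
    jacobiTheta (I * t⁻¹) = t ^ (1 / 2 : ℂ) * jacobiTheta (I * t) := by
  have hτ : 0 < (I * t).im := by simpa using ht
  have h : jacobiTheta (-(I * t))⁻¹ = (-I * (I * t)) ^ (1 / 2 : ℂ) * jacobiTheta (I * t) := by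
    have := jacobiTheta_S_smul ⟨I * t, hτ⟩
    rwa [UpperHalfPlane.modular_S_smul] at this
  have ht0 : t ≠ 0 := ne_of_apply_ne re ht.ne'
  have hinv : (-(I * t))⁻¹ = I * t⁻¹ := by
    field_simp
    linear_combination -I_sq
  have hsq : -I * (I * t) = t := by linear_combination -t * I_sq
  rwa [hinv, hsq] at h

end ThetaOnRightHalfPlane

/-- The Poisson–Jacobi formula: for `λ > 0` and a nonzero complex `a` with `|arg a| < π/4`,
`∑_{n≥1} e^{-λn²/a²} = (a/2)√(π/λ) - 1/2 + a√(π/λ) ∑_{n≥1} e^{-π²n²a²/λ}`,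
both series converging absolutely. -/
theorem poisson_jacobi (lam : ℝ) (hlam : 0 < lam) (a : ℂ) (ha : a ≠ 0)
    (harg : |a.arg| < π / 4) :
    Summable (fun n : ℕ => ‖Complex.exp (-(lam : ℂ) * ((n : ℂ) + 1) ^ 2 / a ^ 2)‖) ∧
    Summable (fun n : ℕ => ‖Complex.exp (-(π : ℂ) ^ 2 * ((n : ℂ) + 1) ^ 2 * a ^ 2 / (lam : ℂ))‖) ∧
    ∑' n : ℕ, Complex.exp (-(lam : ℂ) * ((n : ℂ) + 1) ^ 2 / a ^ 2)
      = a / 2 * (Real.sqrt (π / lam) : ℂ) - 1 / 2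
        + a * (Real.sqrt (π / lam) : ℂ) *
          ∑' n : ℕ, Complex.exp (-(π : ℂ) ^ 2 * ((n : ℂ) + 1) ^ 2 * a ^ 2 / (lam : ℂ)) := by
  set t : ℂ := ((π / lam : ℝ) : ℂ) * a ^ 2 with ht_def
  have ht : 0 < t.re := by
    rw [ht_def, re_ofReal_mul]
    exact mul_pos (div_pos pi_pos hlam) (re_sq_pos_of_abs_arg_lt_pi_div_four ha harg)
  have hre : 0 < a.re :=
    (abs_arg_lt_pi_div_two_iff.mp (harg.trans (by linarith [pi_pos]))).resolve_right ha
  have hsqrt : t ^ (1 / 2 : ℂ) = a * (Real.sqrt (π / lam) : ℂ) :=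
    ofReal_mul_sq_cpow_one_half (div_pos pi_pos hlam) hre
  have hlam0 : (lam : ℂ) ≠ 0 := ofReal_ne_zero.mpr hlam.ne'
  have hpi0 : (π : ℂ) ≠ 0 := ofReal_ne_zero.mpr pi_ne_zero
  have h₁ : ∀ n : ℕ, -(lam : ℂ) * ((n : ℂ) + 1) ^ 2 / a ^ 2 = -π * ((n : ℂ) + 1) ^ 2 * t⁻¹ := by
    intro n; rw [ht_def]; push_cast; field_simp
  have h₂ : ∀ n : ℕ, -(π : ℂ) ^ 2 * ((n : ℂ) + 1) ^ 2 * a ^ 2 / (lam : ℂ)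
      = -π * ((n : ℂ) + 1) ^ 2 * t := by
    intro n; rw [ht_def]; push_cast; field_simp
  simp_rw [h₁, h₂]
  refine ⟨summable_norm_cexp_neg_pi_mul_succ_sq (inv_re_pos ht),
    summable_norm_cexp_neg_pi_mul_succ_sq ht, ?_⟩
  have h := jacobiTheta_I_mul_inv ht
  rw [jacobiTheta_I_mul (inv_re_pos ht), jacobiTheta_I_mul ht, hsqrt] at h
  linear_combination h / 2
end

section
/- Let p be a nonnegative integer and set c_j := (−2p)_{2j}/(2^{2j} j!) for 0 ≤ j ≤ p, where (x)_n = x(x+1)⋯(x+n−1) is the Pochhammer symbol. Then for every complex s with Re(s) > 2p − 1, Γ(1/2 + s/2)·Γ(1 + s/2)/Γ(1 − p + s/2) = ∑_{j=0}^p (−1)^j c_j Γ(s/2 + p + 1/2 − j). Equivalently, 2^{−s}√π·Γ(1+s)/Γ(1 − p + s/2) = ∑_{j=0}^p (−1)^j c_j Γ(s/2 + p + 1/2 − j). -/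
/-!
Put `w = 1/2 + s/2` and `z = 1 - p + s/2 = (1/2 - p) + w`. Since `Γ(z + p) = (z)_p Γ(z)` and
`Γ(w + p - j) = (w)_{p-j} Γ(w)`, the first identity is `Γ(w)` times the polynomial identity
`(1/2 - p + w)_p = ∑_j C(p,j) (1/2 - p)_j (w)_{p-j}`, which is the Chu–Vandermonde identity: the
duplication `(2x)_{2j} = 4^j (x)_j (x + 1/2)_j` at `x = -p` gives `(-1)^j c_j = C(p,j) (1/2 - p)_j`.
The second identity is the first one rewritten by Legendre's duplication formula
`Γ(w) Γ(w + 1/2) = 2^{-s} √π Γ(1 + s)`.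
-/

open Real Finset

theorem ascPochhammer_eval_add {R : Type*} [CommSemiring R] (x y : R) (n : ℕ) :
    (ascPochhammer R n).eval (x + y) = ∑ ij ∈ antidiagonal n,
      n.choose ij.1 * ((ascPochhammer R ij.1).eval x * (ascPochhammer R ij.2).eval y) := by
  induction n with
  | zero => simp
  | succ n ih =>
    rw [sum_antidiagonal_choose_succ_mul
      (fun i j => (ascPochhammer R i).eval x * (ascPochhammer R j).eval y),
      ascPochhammer_succ_eval, ih, sum_mul, ← sum_add_distrib]
    refine sum_congr rfl fun ij hij => ?_
    rw [HasAntidiagonal.mem_antidiagonal] at hij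
    rw [Nat.choose_symm_of_eq_add hij.symm, ascPochhammer_succ_eval, ascPochhammer_succ_eval,
      ← hij]
    push_cast
    ring

theorem ascPochhammer_eval_add_eq_sum_range {R : Type*} [CommSemiring R] (x y : R) (n : ℕ) :
    (ascPochhammer R n).eval (x + y) = ∑ k ∈ range (n + 1),
      n.choose k * (ascPochhammer R k).eval x * (ascPochhammer R (n - k)).eval y := by
  rw [ascPochhammer_eval_add, Nat.sum_antidiagonal_eq_sum_range_succ
    (fun i j => (n.choose i : R) * ((ascPochhammer R i).eval x * (ascPochhammer R j).eval y))]
  simp only [mul_assoc]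

theorem ascPochhammer_eval_two_mul {K : Type*} [Field K] [NeZero (2 : K)] (x : K) (n : ℕ) :
    (ascPochhammer K (2 * n)).eval (2 * x)
      = 2 ^ (2 * n) * (ascPochhammer K n).eval x * (ascPochhammer K n).eval (x + 1 / 2) := by
  induction n with
  | zero => simp
  | succ n ih =>
    have h2 : (2 : K) ≠ 0 := two_ne_zero
    rw [show 2 * (n + 1) = 2 * n + 1 + 1 by ring, ascPochhammer_succ_eval,
      ascPochhammer_succ_eval, ih, ascPochhammer_succ_eval, ascPochhammer_succ_eval]
    push_cast
    field_simp
    ring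

theorem ascPochhammer_eval_neg_natCast {R : Type*} [CommRing R] (p j : ℕ) :
    (ascPochhammer R j).eval (-(p : R)) = (-1) ^ j * (j.factorial * p.choose j) := by
  rw [ascPochhammer_eval_neg_eq_descPochhammer, descPochhammer_eval_eq_descFactorial,
    Nat.descFactorial_eq_factorial_mul_choose]
  push_cast
  rfl

theorem ascPochhammer_eval_neg_two_mul_div {K : Type*} [Field K] [CharZero K] (p j : ℕ) :
    (ascPochhammer K (2 * j)).eval (-(2 * (p : K))) / (2 ^ (2 * j) * j.factorial)
      = (-1) ^ j * (p.choose j : K) * (ascPochhammer K j).eval (1 / 2 - p : K) := by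
  rw [← mul_neg, ascPochhammer_eval_two_mul, ascPochhammer_eval_neg_natCast, neg_add_eq_sub]
  have hfac : (j.factorial : K) ≠ 0 := Nat.cast_ne_zero.2 j.factorial_ne_zero
  field_simp

namespace Complex

theorem ofReal_ascPochhammer_eval (n : ℕ) (x : ℝ) :
    (((ascPochhammer ℝ n).eval x : ℝ) : ℂ) = (ascPochhammer ℂ n).eval (x : ℂ) := by
  rw [ascPochhammer_eval₂ ofRealHom]
  exact (Polynomial.eval₂_at_apply ofRealHom x).symm

theorem ne_neg_natCast_of_re_pos {z : ℂ} (hz : 0 < z.re) (k : ℕ) : z ≠ -k := by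
  rintro rfl
  have := Nat.cast_nonneg (α := ℝ) k
  simp at hz
  linarith

theorem Gamma_add_nat_eq_ascPochhammer_mul {z : ℂ} (hz : ∀ k : ℕ, z ≠ -k) (n : ℕ) :
    Gamma (z + n) = (ascPochhammer ℂ n).eval z * Gamma z := by
  rw [← Gamma_add_nat_div_Gamma_eq z hz, div_mul_cancel₀ _ (Gamma_ne_zero hz)]

theorem ascPochhammer_mul_Gamma_eq_sum {w : ℂ} (hw : ∀ k : ℕ, w ≠ -k) (p : ℕ) :
    (ascPochhammer ℂ p).eval (1 / 2 - p + w) * Gamma w = ∑ j ∈ range (p + 1),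
      (p.choose j : ℂ) * (ascPochhammer ℂ j).eval (1 / 2 - p : ℂ) * Gamma (w + (p - j : ℕ)) := by
  simp only [ascPochhammer_eval_add_eq_sum_range, sum_mul, Gamma_add_nat_eq_ascPochhammer_mul hw,
    mul_assoc]

end Complex

/-- The terminating inverse-factorial expansion (3.5)–(3.6) of the paper:
for a nonnegative integer `p`, `c_j = (-2p)_{2j}/(2^{2j} j!)` and `Re s > 2p - 1`,
`Γ(1/2+s/2)Γ(1+s/2)/Γ(1-p+s/2) = ∑_{j=0}^p (-1)^j c_j Γ(s/2+p+1/2-j)`, equivalently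
`2^{-s}√π Γ(1+s)/Γ(1-p+s/2) = ∑_{j=0}^p (-1)^j c_j Γ(s/2+p+1/2-j)`. -/
theorem gamma_quotient_terminating_expansion (p : ℕ)
    (c : ℕ → ℝ)
    (hc : ∀ j, c j = (ascPochhammer ℝ (2 * j)).eval (-(2 * (p : ℝ)))
        / (2 ^ (2 * j) * (j.factorial : ℝ)))
    (s : ℂ) (hs : 2 * (p : ℝ) - 1 < s.re) :
    Complex.Gamma (1 / 2 + s / 2) * Complex.Gamma (1 + s / 2) / Complex.Gamma (1 - p + s / 2)
      = ∑ j ∈ range (p + 1), (-1) ^ j * (c j : ℂ) *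
          Complex.Gamma (s / 2 + (p : ℂ) + 1 / 2 - j) ∧
    (2 : ℂ) ^ (-s) * (Real.sqrt π : ℂ) * Complex.Gamma (1 + s) / Complex.Gamma (1 - p + s / 2)
      = ∑ j ∈ range (p + 1), (-1) ^ j * (c j : ℂ) *
          Complex.Gamma (s / 2 + (p : ℂ) + 1 / 2 - j) := by
  set w : ℂ := 1 / 2 + s / 2 with hw
  set z : ℂ := 1 - p + s / 2 with hz
  have hw_re : 0 < w.re := by
    simp only [hw, Complex.add_re, Complex.div_ofNat_re, one_div, Complex.inv_re,
      Complex.re_ofNat, Complex.normSq_ofNat, div_self_mul_self']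
    linarith [(Nat.cast_nonneg p : (0 : ℝ) ≤ p)]
  have hz_re : 0 < z.re := by
    simp only [hz, Complex.add_re, Complex.sub_re, Complex.one_re, Complex.natCast_re,
      Complex.div_ofNat_re]
    linarith
  have hcoef (j : ℕ) :
      (-1) ^ j * (c j : ℂ) = p.choose j * (ascPochhammer ℂ j).eval (1 / 2 - p : ℂ) := by
    rw [hc j, ascPochhammer_eval_neg_two_mul_div]
    push_cast
    rw [Complex.ofReal_ascPochhammer_eval]
    push_cast
    rw [← mul_assoc, ← mul_assoc, ← mul_pow]
    norm_num
  have hsum : ∑ j ∈ range (p + 1), (-1) ^ j * (c j : ℂ) * Complex.Gamma (s / 2 + p + 1 / 2 - j)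
      = (ascPochhammer ℂ p).eval z * Complex.Gamma w := by
    rw [show z = 1 / 2 - p + w by rw [hz, hw]; ring,
      Complex.ascPochhammer_mul_Gamma_eq_sum (Complex.ne_neg_natCast_of_re_pos hw_re)]
    refine sum_congr rfl fun j hj => ?_
    rw [hcoef, Nat.cast_sub (mem_range_succ_iff.1 hj), hw]
    ring_nf
  have hfirst : Complex.Gamma w * Complex.Gamma (1 + s / 2) / Complex.Gamma z
      = ∑ j ∈ range (p + 1), (-1) ^ j * (c j : ℂ) * Complex.Gamma (s / 2 + p + 1 / 2 - j) := by
    rw [hsum, show 1 + s / 2 = z + p by rw [hz]; ring,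
      Complex.Gamma_add_nat_eq_ascPochhammer_mul (Complex.ne_neg_natCast_of_re_pos hz_re)]
    field_simp [Complex.Gamma_ne_zero_of_re_pos hz_re]
  refine ⟨hfirst, ?_⟩
  rw [← hfirst, show 1 + s / 2 = w + 1 / 2 by rw [hw]; ring, Complex.Gamma_mul_Gamma_add_half,
    show 2 * w = 1 + s by rw [hw]; ring, show 1 - (1 + s) = -s by ring]
  ring
end
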